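/- Upper bound for the Riccati-type value function: for 𝒪 ⊂ ℝⁿ nonempty compact, 𝔠>0, λ>0, let p = (−λ+√(λ²+4𝔠))/2 be the positive root of p²+λp−𝔠=0. If x ∈ ℝⁿ, z ∈ 𝒪 realizes dist(x,𝒪), and we use the control α(t) = −p(x−z)e^{−pt}, the resulting trajectory y(t) = z + (x−z)e^{−pt} yields cost ∫₀^∞ (½|α(t)|² + (𝔠/2)dist(y(t),𝒪)²) e^{−λt} dt ≤ (p/2) dist(x,𝒪)². Hence R_𝔠(x,𝒪) ≤ (p/2) dist(x,𝒪)². -/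

import Mathlib

open MeasureTheory Set Metric

/-- Admissible control-trajectory pair. -/
def Admissible {n : ℕ} (x : EuclideanSpace ℝ (Fin n))
    (α y : ℝ → EuclideanSpace ℝ (Fin n)) : Prop :=
  Measurable α ∧ y 0 = x ∧ ∀ t, 0 ≤ t → HasDerivAt y (α t) t

/-- Riccati-type value function with running cost `½|α|² + (𝔠/2) dist(y,𝒪)²`. -/
noncomputable def riccatiValue {n : ℕ} (lam c : ℝ) (O : Set (EuclideanSpace ℝ (Fin n)))
    (x : EuclideanSpace ℝ (Fin n)) : ℝ :=
  sInf {r | ∃ α y, Admissible x α y ∧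
    r = ∫ s in Ioi (0 : ℝ),
          ((1 / 2) * ‖α s‖ ^ 2 + (c / 2) * (infDist (y s) O) ^ 2) * Real.exp (-lam * s)}

/-!
Along the straight-line trajectory `y t = z + e^{-pt} (x - z)` towards a nearest point `z ∈ 𝒪`,
both `|α t|²` and `dist(y t, 𝒪)²` are at most `e^{-2pt}` times their value at `t = 0`, so the
discounted cost is at most `(p² + 𝔠) / (2(λ + 2p)) · dist(x, 𝒪)²`. Choosing `p` as the positive
root of `p² + λp = 𝔠` turns this coefficient into `p / 2`.
-/

section RiccatiRoot

variable {lam c p : ℝ}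

lemma riccatiRoot_pos (hc : 0 < c) (hp : p = (-lam + Real.sqrt (lam ^ 2 + 4 * c)) / 2) :
    0 < p := by
  have : lam < Real.sqrt (lam ^ 2 + 4 * c) := Real.lt_sqrt_of_sq_lt (by linarith)
  rw [hp]
  linarith

lemma riccatiRoot_sq_add_mul (hc : 0 ≤ c) (hp : p = (-lam + Real.sqrt (lam ^ 2 + 4 * c)) / 2) :
    p ^ 2 + lam * p = c := by
  have hs : Real.sqrt (lam ^ 2 + 4 * c) ^ 2 = lam ^ 2 + 4 * c := Real.sq_sqrt (by positivity)
  rw [hp]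
  linear_combination (1 / 4) * hs

lemma riccatiRoot_add_two_mul_pos (hc : 0 < c)
    (hp : p = (-lam + Real.sqrt (lam ^ 2 + 4 * c)) / 2) : 0 < lam + 2 * p := by
  have : lam + 2 * p = Real.sqrt (lam ^ 2 + 4 * c) := by rw [hp]; ring
  exact this ▸ Real.sqrt_pos.2 (by positivity)

lemma riccatiRoot_cost_coeff (hc : 0 < c) (hp : p = (-lam + Real.sqrt (lam ^ 2 + 4 * c)) / 2) :
    (p ^ 2 + c) / (2 * (lam + 2 * p)) = p / 2 := by
  have hb := riccatiRoot_add_two_mul_pos hc hp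
  rw [div_eq_iff (by positivity)]
  linear_combination -riccatiRoot_sq_add_mul hc.le hp

end RiccatiRoot

section DiscountedCost

variable {n : ℕ} {lam c p : ℝ} {O : Set (EuclideanSpace ℝ (Fin n))}
  {x z : EuclideanSpace ℝ (Fin n)}

noncomputable def discountedCost (lam c : ℝ) (O : Set (EuclideanSpace ℝ (Fin n)))
    (α y : ℝ → EuclideanSpace ℝ (Fin n)) : ℝ :=
  ∫ s in Ioi (0 : ℝ),
    ((1 / 2) * ‖α s‖ ^ 2 + (c / 2) * (infDist (y s) O) ^ 2) * Real.exp (-lam * s)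

lemma discountedCost_nonneg (hc : 0 ≤ c) (α y : ℝ → EuclideanSpace ℝ (Fin n)) :
    0 ≤ discountedCost lam c O α y :=
  setIntegral_nonneg measurableSet_Ioi fun t _ => by
    have := infDist_nonneg (x := y t) (s := O)
    positivity

lemma riccatiValue_le_discountedCost (hc : 0 ≤ c) {α y : ℝ → EuclideanSpace ℝ (Fin n)}
    (h : Admissible x α y) : riccatiValue lam c O x ≤ discountedCost lam c O α y :=
  csInf_le ⟨0, by rintro r ⟨α', y', -, rfl⟩; exact discountedCost_nonneg hc α' y'⟩ ⟨α, y, h, rfl⟩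

lemma admissible_exp_decay (p : ℝ) (x z : EuclideanSpace ℝ (Fin n)) :
    Admissible x (fun t => (-(p * Real.exp (-p * t))) • (x - z))
      (fun t => z + Real.exp (-p * t) • (x - z)) := by
  refine ⟨by fun_prop, by simp, fun t _ => ?_⟩
  have hexp : HasDerivAt (fun t : ℝ => Real.exp (-p * t)) (Real.exp (-p * t) * -p) t := by
    simpa using ((hasDerivAt_id t).const_mul (-p)).exp
  dsimp only
  rw [show -(p * Real.exp (-p * t)) = Real.exp (-p * t) * -p by ring]
  exact (hexp.smul_const (x - z)).const_add z

lemma infDist_exp_decay_le (hz : z ∈ O) (t : ℝ) :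
    infDist (z + Real.exp (-p * t) • (x - z)) O ≤ Real.exp (-p * t) * ‖x - z‖ :=
  calc infDist (z + Real.exp (-p * t) • (x - z)) O
      ≤ dist (z + Real.exp (-p * t) • (x - z)) z := infDist_le_dist_of_mem hz
    _ = Real.exp (-p * t) * ‖x - z‖ := by
      rw [dist_eq_norm, add_sub_cancel_left, norm_smul, Real.norm_of_nonneg (Real.exp_pos _).le]

lemma exp_decay_integrand_le (hz : z ∈ O) (hp : 0 ≤ p) (hc : 0 ≤ c) (t : ℝ) :
    ((1 / 2) * ‖(-(p * Real.exp (-p * t))) • (x - z)‖ ^ 2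
        + (c / 2) * (infDist (z + Real.exp (-p * t) • (x - z)) O) ^ 2) * Real.exp (-lam * t)
      ≤ (p ^ 2 + c) / 2 * ‖x - z‖ ^ 2 * Real.exp (-(lam + 2 * p) * t) := by
  have hnorm : ‖(-(p * Real.exp (-p * t))) • (x - z)‖ = p * Real.exp (-p * t) * ‖x - z‖ := by
    rw [norm_smul, norm_neg, Real.norm_of_nonneg (by positivity)]
  have hdist : (infDist (z + Real.exp (-p * t) • (x - z)) O) ^ 2
      ≤ (Real.exp (-p * t) * ‖x - z‖) ^ 2 :=
    pow_le_pow_left₀ infDist_nonneg (infDist_exp_decay_le hz t) 2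
  have hexp : Real.exp (-(lam + 2 * p) * t) = Real.exp (-p * t) ^ 2 * Real.exp (-lam * t) := by
    rw [sq, ← Real.exp_add, ← Real.exp_add]
    congr 1
    ring
  calc _ ≤ ((1 / 2) * (p * Real.exp (-p * t) * ‖x - z‖) ^ 2
          + (c / 2) * (Real.exp (-p * t) * ‖x - z‖) ^ 2) * Real.exp (-lam * t) := by
        rw [hnorm]
        gcongr
    _ = _ := by
        rw [hexp]
        ring

lemma discountedCost_exp_decay_le (hz : z ∈ O) (hp : 0 ≤ p) (hc : 0 ≤ c)
    (hb : 0 < lam + 2 * p) :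
    discountedCost lam c O (fun t => (-(p * Real.exp (-p * t))) • (x - z))
        (fun t => z + Real.exp (-p * t) • (x - z))
      ≤ (p ^ 2 + c) / (2 * (lam + 2 * p)) * ‖x - z‖ ^ 2 := by
  have hbound : IntegrableOn
      (fun t => (p ^ 2 + c) / 2 * ‖x - z‖ ^ 2 * Real.exp (-(lam + 2 * p) * t)) (Ioi 0) :=
    (exp_neg_integrableOn_Ioi 0 hb).const_mul _
  calc discountedCost lam c O _ _
      ≤ ∫ t in Ioi 0, (p ^ 2 + c) / 2 * ‖x - z‖ ^ 2 * Real.exp (-(lam + 2 * p) * t) :=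
        integral_mono_of_nonneg (ae_of_all _ fun t => by
            have := infDist_nonneg (x := z + Real.exp (-p * t) • (x - z)) (s := O)
            positivity)
          hbound (ae_of_all _ (exp_decay_integrand_le hz hp hc))
    _ = (p ^ 2 + c) / (2 * (lam + 2 * p)) * ‖x - z‖ ^ 2 := by
      rw [integral_const_mul, integral_exp_mul_Ioi (by linarith), mul_zero, Real.exp_zero]
      field_simp

end DiscountedCost

theorem stmt11_general {n : ℕ} (O : Set (EuclideanSpace ℝ (Fin n)))
    (c lam p : ℝ) (hc : 0 < c)
    (hp : p = (-lam + Real.sqrt (lam ^ 2 + 4 * c)) / 2)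
    (x z : EuclideanSpace ℝ (Fin n)) (hz : z ∈ O) (hzd : ‖x - z‖ = infDist x O)
    (α y : ℝ → EuclideanSpace ℝ (Fin n))
    (hα : ∀ t, α t = (-(p * Real.exp (-p * t))) • (x - z))
    (hy : ∀ t, y t = z + Real.exp (-p * t) • (x - z)) :
    (∫ t in Ioi (0 : ℝ),
        ((1 / 2) * ‖α t‖ ^ 2 + (c / 2) * (infDist (y t) O) ^ 2) * Real.exp (-lam * t))
      ≤ (p / 2) * (infDist x O) ^ 2 ∧
    riccatiValue lam c O x ≤ (p / 2) * (infDist x O) ^ 2 := by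
  obtain rfl : α = _ := funext hα
  obtain rfl : y = _ := funext hy
  have hcost := discountedCost_exp_decay_le (x := x) hz (riccatiRoot_pos hc hp).le hc.le
    (riccatiRoot_add_two_mul_pos hc hp)
  rw [riccatiRoot_cost_coeff hc hp, hzd] at hcost
  exact ⟨hcost, (riccatiValue_le_discountedCost hc.le (admissible_exp_decay p x z)).trans hcost⟩

/-- upper bound via the explicit control `α(t) = −p(x−z)e^{−pt}`,
trajectory `y(t) = z + (x−z)e^{−pt}`, where `p = (−λ+√(λ²+4𝔠))/2` and `z ∈ 𝒪`
realizes `dist(x,𝒪)`: the cost is at most `(p/2) dist(x,𝒪)²`, whence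
`R_𝔠(x,𝒪) ≤ (p/2) dist(x,𝒪)²`. -/
theorem stmt11 {n : ℕ} (O : Set (EuclideanSpace ℝ (Fin n)))
    (hO : O.Nonempty) (hOc : IsCompact O)
    (c lam p : ℝ) (hc : 0 < c) (hlam : 0 < lam)
    (hp : p = (-lam + Real.sqrt (lam ^ 2 + 4 * c)) / 2)
    (x z : EuclideanSpace ℝ (Fin n)) (hz : z ∈ O) (hzd : ‖x - z‖ = infDist x O)
    (α y : ℝ → EuclideanSpace ℝ (Fin n))
    (hα : ∀ t, α t = (-(p * Real.exp (-p * t))) • (x - z))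
    (hy : ∀ t, y t = z + Real.exp (-p * t) • (x - z)) :
    (∫ t in Ioi (0 : ℝ),
        ((1 / 2) * ‖α t‖ ^ 2 + (c / 2) * (infDist (y t) O) ^ 2) * Real.exp (-lam * t))
      ≤ (p / 2) * (infDist x O) ^ 2 ∧
    riccatiValue lam c O x ≤ (p / 2) * (infDist x O) ^ 2 :=
  stmt11_general O c lam p hc hp x z hz hzd α y hα hy
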